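/- For every integer s ≥ 0 and every integer k ≥ 0, the k-th derivative at t = 0 of the function t ↦ 2/(1 + e^{-t})^{s+1} equals ∑_{j=1}^{s+1} (-1)^{k+j-1} γ_{s+1,j} E_{k+j-1}(0), where γ_{s+1,j} = (-1)^{j-1} c(s+1, j)/s! and c(·,·) denotes the unsigned Stirling numbers of the first kind. -/

import Mathlib

/-- Unsigned (signless) Stirling numbers of the first kind: `c(n,k)` is the number of
permutations of `n` elements with `k` cycles. -/
def stirling1 : ℕ → ℕ → ℕ
  | 0, 0 => 1
  | 0, _ + 1 => 0
  | _ + 1, 0 => 0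
  | n + 1, k + 1 => n * stirling1 n (k + 1) + stirling1 n k

/-- `E_m(0)`: the value of the `m`-th Euler polynomial at `0`. -/
noncomputable def eulerAtZero : ℕ → ℝ
  | 0 => 1
  | m + 1 => 2 * (1 - 2 ^ (m + 2)) * ((bernoulli (m + 2) : ℚ) : ℝ) / (m + 2)

/-!
With `σ` the logistic sigmoid, the function is `f_s = 2 σ^(s+1)`, and `σ' = σ (1 - σ)` gives
`f_(s+1) = f_s - f_s' / (s + 1)`. Hence `f_s = (1/s!) ∏_{j=1}^{s} (j - D) f_0`, and since
`(1 - x)(2 - x) ⋯ (s - x) = ∑ᵢ (-1)^i c(s+1, i+1) x^i`, every derivative of `f_s` at `0` is a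
Stirling combination of derivatives of `f_0 = 2σ`.

It remains to see that `2σ(-t) = 2 / (e^t + 1)` generates the `E_m(0)`. With `B(t) = t / (e^t - 1)`
one has `t · 2 / (e^t + 1) = 2 (B(t) - B(2t))`, which is the formula defining `E_m(0)`. Both
`(E_m(0))` and the Taylor coefficients of `2 / (e^t + 1)` satisfy the recurrence
`a_k + ∑_{i ≤ k} C(k, i) a_i = 2 δ_{k0}` that multiplication by `e^t + 1` produces, and that
recurrence determines the sequence.
-/

open Finset PowerSeries Nat ContDiff Real

theorem stirling1_eq_stirlingFirst : stirling1 = Nat.stirlingFirst := by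
  funext n k
  induction n generalizing k with
  | zero => cases k <;> rfl
  | succ n ih => cases k <;> simp [stirling1, Nat.stirlingFirst, ih]

section StirlingSum

variable {R : Type*} [CommRing R]

def stirlingSum (d : ℕ → R) (s k : ℕ) : R :=
  ∑ i ∈ range (s + 1), (-1) ^ i * (stirling1 (s + 1) (i + 1) : R) * d (k + i)

theorem stirlingSum_zero (d : ℕ → R) (k : ℕ) : stirlingSum d 0 k = d k := by
  simp [stirlingSum, stirling1]

theorem stirlingSum_succ (d : ℕ → R) (s k : ℕ) :
    stirlingSum d (s + 1) k = (s + 1) * stirlingSum d s k - stirlingSum d s (k + 1) := by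
  have hsucc : ∀ i, (stirling1 (s + 2) (i + 1) : R) =
      (s + 1) * stirling1 (s + 1) (i + 1) + stirling1 (s + 1) i := fun i => by
    simp only [stirling1]; push_cast; ring
  have hsplit : stirlingSum d (s + 1) k =
      (s + 1) * ∑ i ∈ range (s + 2), (-1) ^ i * (stirling1 (s + 1) (i + 1) : R) * d (k + i) +
        ∑ i ∈ range (s + 2), (-1) ^ i * (stirling1 (s + 1) i : R) * d (k + i) := by
    rw [stirlingSum, mul_sum, ← sum_add_distrib]
    exact sum_congr rfl fun i _ => by rw [hsucc]; ring
  have hlast : stirling1 (s + 1) (s + 2) = 0 := by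
    rw [stirling1_eq_stirlingFirst]
    exact stirlingFirst_eq_zero_of_lt (by omega)
  have hshift : ∑ i ∈ range (s + 2), (-1) ^ i * (stirling1 (s + 1) i : R) * d (k + i) =
      -stirlingSum d s (k + 1) := by
    rw [sum_range_succ', stirlingSum, ← sum_neg_distrib, show stirling1 (s + 1) 0 = 0 from rfl,
      Nat.cast_zero, mul_zero, zero_mul, add_zero]
    exact sum_congr rfl fun i _ => by rw [pow_succ, ← add_assoc, add_right_comm k i 1]; ring
  rw [hsplit, hshift, sum_range_succ, hlast, Nat.cast_zero, mul_zero, zero_mul, add_zero,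
    sub_eq_add_neg]
  rfl

end StirlingSum

theorem iteratedDeriv_eq_stirlingSum_div_factorial {𝕜 : Type*} [NontriviallyNormedField 𝕜]
    [CharZero 𝕜] {f : ℕ → 𝕜 → 𝕜} (hf : ∀ s, ContDiff 𝕜 ∞ (f s))
    (hrec : ∀ s, f (s + 1) = f s - ((s : 𝕜) + 1)⁻¹ • deriv (f s)) (x : 𝕜) (s k : ℕ) :
    iteratedDeriv k (f s) x = stirlingSum (fun m => iteratedDeriv m (f 0) x) s k / s ! := by
  induction s generalizing k with
  | zero => simp [stirlingSum_zero]
  | succ s ih =>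
    have hderiv : ContDiff 𝕜 ∞ (deriv (f s)) := (contDiff_infty_iff_deriv.mp (hf s)).2
    have hle : ((k : ℕ) : WithTop ℕ∞) ≤ ∞ := by exact_mod_cast le_top
    rw [hrec, iteratedDeriv_sub (g := ((s : 𝕜) + 1)⁻¹ • deriv (f s))
      ((hf s).contDiffAt.of_le hle) (((hderiv.const_smul ((s : 𝕜) + 1)⁻¹).contDiffAt).of_le hle),
      iteratedDeriv_const_smul_field, ← iteratedDeriv_succ', ih, ih, stirlingSum_succ,
      factorial_succ]
    have hs : (s : 𝕜) + 1 ≠ 0 := by exact_mod_cast succ_ne_zero s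
    have hfact : (s ! : 𝕜) ≠ 0 := by exact_mod_cast factorial_ne_zero s
    rw [smul_eq_mul, cast_mul, cast_succ]
    field_simp

theorem eq_of_add_sum_choose_nsmul_eq {M : Type*} [AddCancelCommMonoid M] [IsAddTorsionFree M]
    {a b c : ℕ → M} (ha : ∀ k, a k + ∑ i ∈ range (k + 1), k.choose i • a i = c k)
    (hb : ∀ k, b k + ∑ i ∈ range (k + 1), k.choose i • b i = c k) : a = b := by
  funext k
  induction k using Nat.strong_induction_on with
  | _ k ih =>
  have hrec : ∀ a : ℕ → M, a k + ∑ i ∈ range (k + 1), k.choose i • a i =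
      2 • a k + ∑ i ∈ range k, k.choose i • a i := fun a => by
    rw [sum_range_succ, Nat.choose_self, one_smul, two_nsmul]; abel
  have h := (hrec a).symm.trans ((ha k).trans ((hb k).symm.trans (hrec b)))
  rw [sum_congr rfl fun i hi => by rw [ih i (mem_range.mp hi)]] at h
  exact IsAddTorsionFree.nsmul_right_injective two_ne_zero (add_right_cancel h)

noncomputable def eulerSeries : ℝ⟦X⟧ := PowerSeries.mk fun n => eulerAtZero n / n !

theorem X_mul_eulerSeries :
    X * eulerSeries = (2 : ℝ) • (bernoulliPowerSeries ℝ - rescale 2 (bernoulliPowerSeries ℝ)) := by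
  ext (_ | m)
  · simp only [coeff_zero_X_mul, map_smul, map_sub, coeff_rescale, pow_zero, one_mul, sub_self,
      smul_zero]
  · rw [coeff_succ_X_mul]
    simp only [eulerSeries, bernoulliPowerSeries, coeff_mk, map_smul, map_sub, coeff_rescale,
      smul_eq_mul, eq_ratCast, Rat.cast_div, Rat.cast_natCast]
    rcases m with _ | m
    · norm_num [eulerAtZero, bernoulli_one]
    · rw [eulerAtZero, factorial_succ (m + 1)]
      push_cast
      field_simp
      ring

theorem eulerSeries_mul_exp_add_one : eulerSeries * (exp ℝ + 1) = 2 := by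
  have hB := bernoulliPowerSeries_mul_exp_sub_one ℝ
  have hB2 : rescale 2 (bernoulliPowerSeries ℝ) * (exp ℝ ^ 2 - 1) = C 2 * X := by
    rw [exp_pow_eq_rescale_exp, Nat.cast_ofNat, ← map_one (rescale (2 : ℝ)), ← map_sub,
      ← map_mul, hB, rescale_X]
  have hexp : exp ℝ - 1 ≠ 0 := fun h => by simpa using congr_arg (coeff 1) h
  apply X_mul_cancel
  apply mul_right_cancel₀ hexp
  have hG := X_mul_eulerSeries
  rw [Algebra.smul_def, algebraMap_eq] at hG
  rw [map_ofNat] at hG hB2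
  linear_combination (exp ℝ + 1) * (exp ℝ - 1) * hG + 2 * (exp ℝ + 1) * hB - 2 * hB2

theorem eulerAtZero_add_sum_choose (k : ℕ) :
    eulerAtZero k + ∑ i ∈ range (k + 1), k.choose i • eulerAtZero i = if k = 0 then 2 else 0 := by
  have h := congr_arg (fun f => (k ! : ℝ) * coeff k f) eulerSeries_mul_exp_add_one
  simp only [mul_add, mul_one, map_add, coeff_mul, Nat.sum_antidiagonal_eq_sum_range_succ_mk,
    eulerSeries, coeff_mk, coeff_exp, mul_sum] at h
  have hterm : ∀ i ∈ range (k + 1),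
      (k ! : ℝ) * (eulerAtZero i / i ! * algebraMap ℚ ℝ (1 / (k - i)!)) =
        k.choose i • eulerAtZero i := fun i hi => by
    rw [nsmul_eq_mul, Nat.cast_choose ℝ (mem_range_succ_iff.mp hi)]
    simp only [one_div, map_inv₀, map_natCast]
    field_simp
  have hlast : (k ! : ℝ) * (eulerAtZero k / k !) = eulerAtZero k :=
    mul_div_cancel₀ _ (by positivity)
  have hrhs : (k ! : ℝ) * coeff k (2 : ℝ⟦X⟧) = if k = 0 then 2 else 0 := by
    rw [← map_ofNat C 2, coeff_C]
    split_ifs with hk <;> simp [hk]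
  rw [sum_congr rfl hterm, hlast, hrhs, add_comm] at h
  exact h

theorem iteratedDeriv_two_mul_sigmoid_neg (k : ℕ) :
    iteratedDeriv k (fun t => 2 * sigmoid (-t)) 0 = eulerAtZero k := by
  have hψ : ContDiff ℝ ∞ fun t => 2 * sigmoid (-t) :=
    (contDiff_const.mul (contDiff_sigmoid.comp contDiff_neg)).of_le le_top
  set ψ := fun t => 2 * sigmoid (-t) with hψ_def
  have hexp : ContDiff ℝ ∞ Real.exp := contDiff_exp
  have hsum : (fun t => ψ t + ψ t * Real.exp t) = fun _ => 2 := by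
    funext t
    have h := sigmoid_mul_rexp_neg (-t)
    rw [neg_neg] at h
    rw [hψ_def]
    linear_combination 2 * h + 2 * sigmoid_neg t
  have hrec : ∀ n, iteratedDeriv n ψ 0 + ∑ i ∈ range (n + 1), n.choose i • iteratedDeriv i ψ 0 =
      if n = 0 then 2 else 0 := fun n => by
    have hle : ((n : ℕ) : WithTop ℕ∞) ≤ ∞ := by exact_mod_cast le_top
    have h := congr_arg (iteratedDeriv n · 0) hsum
    simp only [iteratedDeriv_const] at h
    rw [iteratedDeriv_fun_add (hψ.contDiffAt.of_le hle) ((hψ.mul hexp).contDiffAt.of_le hle),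
      iteratedDeriv_fun_mul (hψ.contDiffAt.of_le hle) (hexp.contDiffAt.of_le hle)] at h
    simpa [iteratedDeriv_eq_iterate, iter_deriv_exp, nsmul_eq_mul] using h
  exact congr_fun (eq_of_add_sum_choose_nsmul_eq hrec eulerAtZero_add_sum_choose) k

theorem iteratedDeriv_two_mul_sigmoid (k : ℕ) :
    iteratedDeriv k (fun t => 2 * sigmoid t) 0 = (-1) ^ k * eulerAtZero k := by
  have h := iteratedDeriv_comp_neg k (fun t => 2 * sigmoid (-t)) 0
  simp only [neg_neg, neg_zero, smul_eq_mul, iteratedDeriv_two_mul_sigmoid_neg] at h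
  exact h

theorem two_mul_sigmoid_pow_add_two_eq_sub_smul_deriv (s : ℕ) :
    (fun t => 2 * sigmoid t ^ (s + 2)) =
      (fun t => 2 * sigmoid t ^ (s + 1)) -
        ((s : ℝ) + 1)⁻¹ • deriv fun t => 2 * sigmoid t ^ (s + 1) := by
  funext t
  have hderiv := (((hasDerivAt_sigmoid t).fun_pow (s + 1)).const_mul 2).deriv
  simp only [Pi.sub_apply, Pi.smul_apply, smul_eq_mul, hderiv, add_tsub_cancel_right]
  push_cast
  field_simp
  ring

theorem iteratedDeriv_two_mul_sigmoid_pow (s k : ℕ) :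
    iteratedDeriv k (fun t => 2 * sigmoid t ^ (s + 1)) 0 =
      stirlingSum (fun m => (-1) ^ m * eulerAtZero m) s k / s ! := by
  have hsmooth : ∀ s : ℕ, ContDiff ℝ ∞ fun t => 2 * sigmoid t ^ (s + 1) := fun s =>
    (contDiff_const.mul (contDiff_sigmoid.pow _)).of_le le_top
  rw [iteratedDeriv_eq_stirlingSum_div_factorial hsmooth
    two_mul_sigmoid_pow_add_two_eq_sub_smul_deriv]
  simp only [zero_add, pow_one, iteratedDeriv_two_mul_sigmoid]

/-- For all integers `s ≥ 0` and `k ≥ 0`, the `k`-th derivative at `t = 0`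
of `t ↦ 2/(1 + e^{-t})^{s+1}` equals
`∑_{j=1}^{s+1} (-1)^{k+j-1} γ_{s+1,j} E_{k+j-1}(0)`, where
`γ_{s+1,j} = (-1)^{j-1} c(s+1,j)/s!`. -/
theorem stmt10 (s k : ℕ) :
    iteratedDeriv k (fun t : ℝ => 2 / (1 + Real.exp (-t)) ^ (s + 1)) 0 =
      ∑ j ∈ Finset.Icc 1 (s + 1), (-1 : ℝ) ^ (k + j - 1) *
        ((-1 : ℝ) ^ (j - 1) * (stirling1 (s + 1) j : ℝ) / (Nat.factorial s : ℝ)) *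
          eulerAtZero (k + j - 1) := by
  have hfun : (fun t : ℝ => 2 / (1 + Real.exp (-t)) ^ (s + 1)) =
      fun t => 2 * sigmoid t ^ (s + 1) := by
    funext t
    rw [sigmoid_def, inv_pow, div_eq_mul_inv]
  rw [hfun, iteratedDeriv_two_mul_sigmoid_pow, stirlingSum, sum_div, ← Ico_add_one_right_eq_Icc,
    sum_Ico_eq_sum_range, add_tsub_cancel_right]
  refine sum_congr rfl fun i _ => ?_
  rw [add_comm 1 i, add_tsub_cancel_right, ← add_assoc, add_tsub_cancel_right]
  ring
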